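/- Consider the ranking profile with m = 3 candidates c1, c2, c3 and n = 7 voters whose rank vectors (σ_v(c1), σ_v(c2), σ_v(c3)) are: σ_1 = σ_2 = (1,2,3), σ_3 = σ_4 = (2,1,3), σ_5 = σ_6 = (2,3,1), σ_7 = (3,1,2). Then: (i) c1 is a Condorcet winner of this profile; (ii) for every real q ≥ 1, the permutation with rank vector (2,1,3) is the unique minimizer of ∑_{v=1}^7 d_q(σ, σ_v) over all permutations σ of {1,2,3}. Since this minimizer ranks c2 (and not the Condorcet winner c1) first, the q-Minkowski–Hölder based consensus-ranking (1-Fréchet mean) voting rule does not satisfy the Condorcet-winner property, for any q ≥ 1. -/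

import Mathlib

open Finset

/-- The rank (in `{1, …, m}`) that the ranking `σ` assigns to candidate `c`. -/
def rk {m : ℕ} (σ : Equiv.Perm (Fin m)) (c : Fin m) : ℕ := (σ c : ℕ) + 1

/-- The q-Minkowski–Hölder distance `d_q(σ,τ) = (∑_c |σ(c) − τ(c)|^q)^(1/q)`. -/
noncomputable def dq {m : ℕ} (q : ℝ) (σ τ : Equiv.Perm (Fin m)) : ℝ :=
  (∑ c, |(rk σ c : ℝ) - rk τ c| ^ q) ^ (1 / q)

/-!
Write `a = 2^(1/q)` and `b = (2 + 2^q)^(1/q)`. Two rankings of three candidates are at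
`d_q`-distance `0`, `a` (adjacent swap), `2a` (swap of the first and last place) or `b` (3-cycle),
so every consensus cost is an integer combination of `a` and `b`: the cost of `(2,1,3)` is `7a`,
and those of the other five rankings exceed it because `a < b` and `5a < 3b`. The latter is
`2 · 5^q < 6^q + 2 · 3^q`, which follows from weighted AM-GM with weights `3/4, 1/4`:
`6^q + 2 · 3^q ≥ ((4/3)^3 · 8 · 648^q)^(1/4)`, and `512/27 > 16`, `648 > 625 = 5^4`.
-/

-- `dq q σ τ` is by definition `rankDist q (rk σ) (rk τ)`.
noncomputable def rankDist {m : ℕ} (q : ℝ) (r s : Fin m → ℕ) : ℝ :=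
  (∑ c, |(r c : ℝ) - s c| ^ q) ^ (1 / q)

noncomputable def consensusCost {n m : ℕ} (q : ℝ) (R : Fin n → Fin m → ℕ) (r : Fin m → ℕ) : ℝ :=
  ∑ v, rankDist q r (R v)

def IsCondorcetWinner {n m : ℕ} (R : Fin n → Fin m → ℕ) (c₀ : Fin m) : Prop :=
  ∀ c, c ≠ c₀ → #{v | R v c < R v c₀} < #{v | R v c₀ < R v c}

lemma rk_injective {m : ℕ} : Function.Injective (rk (m := m)) := fun _ _ h =>
  Equiv.ext fun c => Fin.ext (by simpa [rk] using congrFun h c)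

lemma rk_cases (σ : Equiv.Perm (Fin 3)) : rk σ = ![1,2,3] ∨ rk σ = ![1,3,2] ∨
    rk σ = ![2,1,3] ∨ rk σ = ![2,3,1] ∨ rk σ = ![3,1,2] ∨ rk σ = ![3,2,1] := by
  revert σ; decide

section

open Real

variable {q : ℝ}

lemma two_mul_five_rpow_lt (hq : 0 ≤ q) : 2 * (5 : ℝ) ^ q < 6 ^ q + 2 * 3 ^ q := by
  set x := (6 : ℝ) ^ q
  set y := (3 : ℝ) ^ q
  set z := (5 : ℝ) ^ q
  have hz : 0 < z := by positivity
  have hxyz : z ^ 4 ≤ x ^ 3 * y := by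
    rw [rpow_pow_comm (by norm_num), rpow_pow_comm (by norm_num),
      ← mul_rpow (by norm_num) (by norm_num)]
    exact rpow_le_rpow (by norm_num) (by norm_num) hq
  set g := (4 / 3 * x) ^ (3 / 4 : ℝ) * (8 * y) ^ (1 / 4 : ℝ)
  have hg : g ^ 4 = 512 / 27 * (x ^ 3 * y) := by
    rw [mul_pow, ← rpow_natCast, ← rpow_natCast (_ ^ (1 / 4 : ℝ)), ← rpow_mul (by positivity),
      ← rpow_mul (by positivity)]
    norm_num
    ring
  have h2z : 2 * z < g :=
    lt_of_pow_lt_pow_left₀ 4 (by positivity) (by rw [hg]; nlinarith [pow_pos hz 4])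
  have amgm := geom_mean_le_arith_mean2_weighted (w₁ := 3 / 4) (w₂ := 1 / 4) (p₁ := 4 / 3 * x)
    (p₂ := 8 * y) (by norm_num) (by norm_num) (by positivity) (by positivity) (by norm_num)
  linarith

lemma rpow_mul_rpow_inv {x y : ℝ} (hx : 0 ≤ x) (hy : 0 ≤ y) (hq : q ≠ 0) :
    (x ^ q * y) ^ q⁻¹ = x * y ^ q⁻¹ := by
  rw [mul_rpow (by positivity) hy, rpow_rpow_inv hx hq]

lemma five_mul_two_rpow_inv_lt (hq : 0 < q) :
    5 * (2 : ℝ) ^ q⁻¹ < 3 * (2 + 2 ^ q) ^ q⁻¹ := by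
  rw [← rpow_mul_rpow_inv (by norm_num) (by norm_num) hq.ne',
    ← rpow_mul_rpow_inv (by norm_num) (by positivity) hq.ne']
  refine rpow_lt_rpow (by positivity) ?_ (by positivity)
  have h6 : (3 : ℝ) ^ q * 2 ^ q = 6 ^ q := by
    rw [← mul_rpow (by norm_num) (by norm_num)]; norm_num
  linarith [two_mul_five_rpow_lt hq.le]

lemma two_rpow_inv_lt (hq : 0 < q) : (2 : ℝ) ^ q⁻¹ < (2 + 2 ^ q) ^ q⁻¹ :=
  rpow_lt_rpow (by norm_num) (by linarith [rpow_pos_of_pos two_pos q]) (by positivity)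

def profileRanks : Fin 7 → Fin 3 → ℕ :=
  ![![1,2,3], ![1,2,3], ![2,1,3], ![2,1,3], ![2,3,1], ![2,3,1], ![3,1,2]]

lemma isCondorcetWinner_profileRanks : IsCondorcetWinner profileRanks 0 := by
  unfold IsCondorcetWinner; decide

lemma consensusCost_profileRanks (hq : q ≠ 0) :
    consensusCost q profileRanks ![2,1,3] = 7 * 2 ^ q⁻¹ ∧
    consensusCost q profileRanks ![1,2,3] = 2 * 2 ^ q⁻¹ + 3 * (2 + 2 ^ q) ^ q⁻¹ ∧
    consensusCost q profileRanks ![1,3,2] = 6 * 2 ^ q⁻¹ + 2 * (2 + 2 ^ q) ^ q⁻¹ ∧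
    consensusCost q profileRanks ![2,3,1] = 4 * 2 ^ q⁻¹ + 3 * (2 + 2 ^ q) ^ q⁻¹ ∧
    consensusCost q profileRanks ![3,1,2] = 2 * 2 ^ q⁻¹ + 4 * (2 + 2 ^ q) ^ q⁻¹ ∧
    consensusCost q profileRanks ![3,2,1] = 7 * 2 ^ q⁻¹ + 2 * (2 + 2 ^ q) ^ q⁻¹ := by
  refine ⟨?_, ?_, ?_, ?_, ?_, ?_⟩ <;>
  · simp only [consensusCost, rankDist, profileRanks, Matrix.cons_val', Matrix.cons_val_fin_one,
      Fin.sum_univ_three, Fin.isValue, Matrix.cons_val_zero, Nat.cast_ofNat, Matrix.cons_val_one,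
      Nat.cast_one, Matrix.cons_val, one_div, Fin.sum_univ_seven, sub_self, abs_zero]
    norm_num [zero_rpow hq, zero_rpow (inv_ne_zero hq)]
    ring_nf
    <;> simp only [rpow_mul_rpow_inv zero_le_two zero_le_two hq]
    <;> ring

lemma consensusCost_profileRanks_lt (hq : 0 < q) {σ : Equiv.Perm (Fin 3)}
    (hσ : rk σ ≠ ![2,1,3]) :
    consensusCost q profileRanks ![2,1,3] < consensusCost q profileRanks (rk σ) := by
  obtain ⟨h213, h123, h132, h231, h312, h321⟩ := consensusCost_profileRanks hq.ne'
  have ha : 0 < (2 : ℝ) ^ q⁻¹ := by positivity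
  have hab := two_rpow_inv_lt hq
  have hkey := five_mul_two_rpow_inv_lt hq
  rw [h213]
  rcases rk_cases σ with h | h | h | h | h | h
  · rw [h, h123]; linarith
  · rw [h, h132]; linarith
  · exact absurd h hσ
  · rw [h, h231]; linarith
  · rw [h, h312]; linarith
  · rw [h, h321]; linarith

end

/-- On the profile σ₁ = σ₂ = (1,2,3), σ₃ = σ₄ = (2,1,3), σ₅ = σ₆ = (2,3,1), σ₇ = (3,1,2):
(i) `c1` is a Condorcet winner; (ii) for every real `q ≥ 1` the permutation π = (2,1,3) is
the unique minimizer of `∑ᵥ d_q(σ, σᵥ)`; π ranks `c2` first, so the q-Minkowski–Hölder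
based consensus-ranking rule fails the Condorcet-winner property for every `q ≥ 1`. -/
theorem stmt_17 (σ1 σ2 σ3 σ4 σ5 σ6 σ7 π : Equiv.Perm (Fin 3))
    (h1 : rk σ1 = ![1,2,3]) (h2 : rk σ2 = ![1,2,3])
    (h3 : rk σ3 = ![2,1,3]) (h4 : rk σ4 = ![2,1,3])
    (h5 : rk σ5 = ![2,3,1]) (h6 : rk σ6 = ![2,3,1])
    (h7 : rk σ7 = ![3,1,2]) (hπ : rk π = ![2,1,3]) :
    (∀ c : Fin 3, c ≠ 0 →
      (univ.filter fun v =>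
          rk (![σ1,σ2,σ3,σ4,σ5,σ6,σ7] v) c < rk (![σ1,σ2,σ3,σ4,σ5,σ6,σ7] v) 0).card <
        (univ.filter fun v =>
          rk (![σ1,σ2,σ3,σ4,σ5,σ6,σ7] v) 0 < rk (![σ1,σ2,σ3,σ4,σ5,σ6,σ7] v) c).card) ∧
    (∀ q : ℝ, 1 ≤ q → ∀ σ : Equiv.Perm (Fin 3), σ ≠ π →
      ∑ v, dq q π (![σ1,σ2,σ3,σ4,σ5,σ6,σ7] v) <
        ∑ v, dq q σ (![σ1,σ2,σ3,σ4,σ5,σ6,σ7] v)) ∧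
    rk π 1 = 1 := by
  set P : Fin 7 → Equiv.Perm (Fin 3) := ![σ1,σ2,σ3,σ4,σ5,σ6,σ7]
  have hP : (fun v => rk (P v)) = profileRanks := by
    funext v; fin_cases v <;> assumption
  refine ⟨?_, fun q hq σ hσ => ?_, by rw [hπ]; rfl⟩
  · change IsCondorcetWinner (fun v => rk (P v)) 0
    rw [hP]
    exact isCondorcetWinner_profileRanks
  · change consensusCost q (fun v => rk (P v)) (rk π) <
      consensusCost q (fun v => rk (P v)) (rk σ)
    rw [hP, hπ]
    exact consensusCost_profileRanks_lt (by linarith) (hπ ▸ rk_injective.ne hσ)
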